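/- arXiv:2106.13882 — 2 statements merged into one kernel-verified Lean document; each statement's English description precedes it below -/
import Mathlib

section
/- Consider a single buyer with two equally likely types over two goods: type 1 values goods (3, 4) and type 2 values goods (4, 9), with additive valuations. The menu {(only good 1, price 3), (both goods, price 12)} is incentive compatible and individually rational (type 1 buys good 1 at price 3; type 2 buys both at price 12), and it yields the seller expected revenue (1/2)·3 + (1/2)·12 = 7.5, which is at least the revenue of any IC, IR deterministic menu for this instance. -/
/-- Additive value of a (deterministic) bundle of two goods for a type `v = (v₁, v₂)`. -/
def bundleVal (v : ℝ × ℝ) (b : Bool × Bool) : ℝ :=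
  (if b.1 then v.1 else 0) + (if b.2 then v.2 else 0)

/-- Utility of a menu option `(bundle, price)` for a buyer of type `v`. -/
def optUtil (v : ℝ × ℝ) (o : (Bool × Bool) × ℝ) : ℝ :=
  bundleVal v o.1 - o.2

/-- Price paid by a buyer choosing a menu option, or nothing. -/
def pricePaid : Option ((Bool × Bool) × ℝ) → ℝ
  | none => 0
  | some o => o.2

lemma bv1_le (b : Bool × Bool) : bundleVal (3, 4) b ≤ 7 := by
  rcases b with ⟨b1, b2⟩; cases b1 <;> cases b2 <;> norm_num [bundleVal]

lemma bv2_le (b : Bool × Bool) : bundleVal (4, 9) b ≤ 13 := by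
  rcases b with ⟨b1, b2⟩; cases b1 <;> cases b2 <;> norm_num [bundleVal]

lemma key (b : Bool × Bool) : 2 * bundleVal (3, 4) b - bundleVal (4, 9) b ≤ 2 := by
  rcases b with ⟨b1, b2⟩; cases b1 <;> cases b2 <;> norm_num [bundleVal]

theorem two_goods_menu_optimal :
    -- the specific menu: (only good 1, price 3) and (both goods, price 12)
    -- type 1 = (3,4) buys only good 1 at price 3, type 2 = (4,9) buys both at price 12
    -- IR for the prescribed choices:
    (0 ≤ optUtil (3, 4) ((true, false), 3)) ∧
    (0 ≤ optUtil (4, 9) ((true, true), 12)) ∧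
    -- IC: the prescribed choices are utility-maximizing over the menu:
    (∀ o ∈ ({((true, false), 3), ((true, true), 12)} : Finset ((Bool × Bool) × ℝ)),
        optUtil (3, 4) o ≤ optUtil (3, 4) ((true, false), 3)) ∧
    (∀ o ∈ ({((true, false), 3), ((true, true), 12)} : Finset ((Bool × Bool) × ℝ)),
        optUtil (4, 9) o ≤ optUtil (4, 9) ((true, true), 12)) ∧
    -- expected revenue:
    ((1/2 : ℝ) * 3 + (1/2) * 12 = 15/2) ∧
    -- optimality: any other deterministic menu, with each type choosing a
    -- utility-maximizing IR option (or nothing only if every option gives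
    -- negative utility), yields revenue at most 15/2
    (∀ (M : Finset ((Bool × Bool) × ℝ)) (c1 c2 : Option ((Bool × Bool) × ℝ)),
      (∀ o, c1 = some o → o ∈ M ∧ 0 ≤ optUtil (3, 4) o ∧
          ∀ o' ∈ M, optUtil (3, 4) o' ≤ optUtil (3, 4) o) →
      (c1 = none → ∀ o' ∈ M, optUtil (3, 4) o' < 0) →
      (∀ o, c2 = some o → o ∈ M ∧ 0 ≤ optUtil (4, 9) o ∧
          ∀ o' ∈ M, optUtil (4, 9) o' ≤ optUtil (4, 9) o) →
      (c2 = none → ∀ o' ∈ M, optUtil (4, 9) o' < 0) →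
      (1/2 : ℝ) * pricePaid c1 + (1/2) * pricePaid c2 ≤ 15/2) := by
  refine ⟨by norm_num [optUtil, bundleVal], by norm_num [optUtil, bundleVal], ?_, ?_, by norm_num, ?_⟩
  · intro o ho
    simp only [Finset.mem_insert, Finset.mem_singleton] at ho
    rcases ho with rfl | rfl <;> norm_num [optUtil, bundleVal]
  · intro o ho
    simp only [Finset.mem_insert, Finset.mem_singleton] at ho
    rcases ho with rfl | rfl <;> norm_num [optUtil, bundleVal]
  · intro M c1 c2 h1 _ h2 _
    cases c1 with
    | none =>
      cases c2 with
      | none => norm_num [pricePaid]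
      | some o2 =>
        obtain ⟨_, hIR, _⟩ := h2 o2 rfl
        have := bv2_le o2.1
        simp only [optUtil] at hIR
        simp only [pricePaid]
        linarith
    | some o1 =>
      obtain ⟨hmem, hIR1, _⟩ := h1 o1 rfl
      have hb1 := bv1_le o1.1
      simp only [optUtil] at hIR1
      cases c2 with
      | none =>
        simp only [pricePaid]
        linarith
      | some o2 =>
        obtain ⟨_, _, hmax2⟩ := h2 o2 rfl
        have hic := hmax2 o1 hmem
        have hb2 := bv2_le o2.1
        have hk := key o1.1
        simp only [optUtil] at hic
        simp only [pricePaid]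
        linarith
end

section
/- Consider a single buyer with values 1, 2, 2+δ (0 < δ < 1) occurring with probabilities 1/3, 5/9, 1/9. Under the disclosure partition {{1, 2+δ}, {2}}: conditional on the message {1, 2+δ}, the posterior puts probability 3/4 on value 1 and 1/4 on value 2+δ, and price 1 yields seller revenue 1 which exceeds (2+δ)/4; hence the seller prices at 1 and the buyer's ex ante utility is at least (1/9)·(1+δ). In contrast, for any equilibrium where every message sent is a set of consecutive values (connected), the buyer's ex ante utility is at most δ/9. -/
open Finset

/-- Buyer values: 1, 2, 2 + δ. -/
noncomputable def vals (δ : ℝ) : Fin 3 → ℝ := ![1, 2, 2 + δ]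

/-- Prior probabilities: 1/3, 5/9, 1/9. -/
noncomputable def probs : Fin 3 → ℝ := ![1/3, 5/9, 1/9]

/-- (Unnormalized) expected revenue of posting price `r` to a buyer known to have a type
in the message `M`. -/
noncomputable def rev (δ : ℝ) (M : Finset (Fin 3)) (r : ℝ) : ℝ :=
  r * ∑ i ∈ M.filter (fun i => r ≤ vals δ i), probs i

/-- A message is connected if it is a set of consecutive types. -/
def IsInterval (M : Finset (Fin 3)) : Prop :=
  ∀ i j k : Fin 3, i ∈ M → k ∈ M → i ≤ j → j ≤ k → j ∈ M

/-!
Only a non-connected message such as `{1, 2 + δ}` lets the seller charge `1` to a buyer whose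
value exceeds `1`: a connected message containing the value `1` and a higher value also contains
`2`, and then price `2` earns at least `2 · 5/9 > 1`, more than price `1` can ever earn. So the
types with values `2` and `2 + δ` face a price of at least `2`, and only value `2 + δ`
(mass `1/9`) keeps a surplus, at most `δ`.
-/

lemma probs_nonneg (i : Fin 3) : 0 ≤ probs i := by
  fin_cases i <;> norm_num [probs]

lemma sum_probs : ∑ i, probs i = 1 := by
  simp [Fin.sum_univ_three, probs]
  norm_num

section

variable {δ : ℝ}

lemma one_le_vals (hδ : 0 ≤ δ) (i : Fin 3) : 1 ≤ vals δ i := by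
  fin_cases i <;> simp [vals]
  linarith

lemma two_le_vals (hδ : 0 ≤ δ) {i : Fin 3} (hi : i ≠ 0) : 2 ≤ vals δ i := by
  fin_cases i <;> simp_all [vals]

lemma rev_le_self (M : Finset (Fin 3)) {r : ℝ} (hr : 0 ≤ r) : rev δ M r ≤ r := by
  have hmass : ∑ i ∈ M.filter (fun i => r ≤ vals δ i), probs i ≤ 1 :=
    sum_probs ▸ sum_le_sum_of_subset_of_nonneg (subset_univ _) fun i _ _ => probs_nonneg i
  simpa [rev] using mul_le_mul_of_nonneg_left hmass hr

lemma mul_probs_le_rev {M : Finset (Fin 3)} {r : ℝ} {i : Fin 3} (hr : 0 ≤ r) (hi : i ∈ M)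
    (hri : r ≤ vals δ i) : r * probs i ≤ rev δ M r :=
  mul_le_mul_of_nonneg_left
    (single_le_sum (fun k _ => probs_nonneg k) (mem_filter.2 ⟨hi, hri⟩)) hr

lemma two_le_optimal_price (hδ : 0 ≤ δ) {M : Finset (Fin 3)} (hM : IsInterval M) {i j : Fin 3}
    (hi : i ∈ M) (hi0 : i ≠ 0) (hj : j ∈ M)
    (hopt : ∀ k ∈ M, rev δ M (vals δ k) ≤ rev δ M (vals δ j)) : 2 ≤ vals δ j := by
  refine two_le_vals hδ fun hj0 => ?_
  subst hj0
  have h1 : (1 : Fin 3) ∈ M := hM 0 1 i hj hi (by decide) (by fin_cases i <;> simp_all)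
  have hv0 : vals δ 0 = 1 := by simp [vals]
  have hv1 : vals δ 1 = 2 := by simp [vals]
  have hlow : rev δ M 1 ≤ 1 := rev_le_self M zero_le_one
  have hhigh : 2 * probs 1 ≤ rev δ M 2 := mul_probs_le_rev zero_le_two h1 hv1.ge
  have hopt1 := hopt 1 h1
  rw [hv0, hv1] at hopt1
  norm_num [probs] at hhigh
  linarith

end

lemma ite_sub_le_sub {p q v : ℝ} (hqp : q ≤ p) (hqv : q ≤ v) :
    (if p ≤ v then v - p else 0) ≤ v - q := by
  split_ifs <;> linarith

theorem connected_inapproximable (δ : ℝ) (h0 : 0 < δ) (h1 : δ < 1) :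
    -- posterior on the message {1, 2+δ}:
    probs 0 / (probs 0 + probs 2) = 3/4 ∧
    probs 2 / (probs 0 + probs 2) = 1/4 ∧
    -- posting price 1 yields (posterior) revenue 1, which exceeds revenue (2+δ)/4
    -- from price 2+δ, so the seller prices at 1:
    (1 : ℝ) * (3/4 + 1/4) = 1 ∧ (2 + δ) / 4 < 1 ∧
    -- hence the buyer's ex ante utility under the partition {{1, 2+δ}, {2}}
    -- (type 1 and type 2+δ pay 1; type 2 pays 2) is at least (1/9)·(1+δ):
    (1/9 : ℝ) * (1 + δ) ≤
      probs 0 * (vals δ 0 - 1) + probs 1 * (vals δ 1 - 2) + probs 2 * (vals δ 2 - 1) ∧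
    -- but in any equilibrium where every message is connected, ex ante utility ≤ δ/9:
    (∀ (part : Fin 3 → Finset (Fin 3)) (price : Finset (Fin 3) → ℝ),
      (∀ i, i ∈ part i) →
      (∀ i j, j ∈ part i → part j = part i) →
      (∀ i, IsInterval (part i)) →
      -- the seller posts a revenue-maximizing price among the values in the message:
      (∀ i, ∃ j ∈ part i, price (part i) = vals δ j) →
      (∀ i, ∀ j ∈ part i, rev δ (part i) (vals δ j) ≤ rev δ (part i) (price (part i))) →
      (∑ i, probs i *
          (if price (part i) ≤ vals δ i then vals δ i - price (part i) else 0)) ≤ δ/9) := by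
  refine ⟨by simp [probs]; norm_num, by simp [probs]; norm_num, by norm_num, by linarith,
    by simp [vals, probs]; linarith, ?_⟩
  intro part price hmem _ hint hpe hmax
  have hfloor : ∀ i, ![1, 2, 2] i ≤ price (part i) := by
    intro i
    obtain ⟨j, hj, hpj⟩ := hpe i
    rw [hpj]
    by_cases hi0 : i = 0
    · simpa [hi0] using one_le_vals h0.le j
    · have h2 := two_le_optimal_price h0.le (hint i) (hmem i) hi0 hj (hpj ▸ hmax i)
      fin_cases i <;> simp_all
  calc ∑ i, probs i * (if price (part i) ≤ vals δ i then vals δ i - price (part i) else 0)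
      ≤ ∑ i, probs i * (vals δ i - ![1, 2, 2] i) :=
        sum_le_sum fun i _ => mul_le_mul_of_nonneg_left
          (ite_sub_le_sub (hfloor i) (by fin_cases i <;> simp [vals, h0.le]))
          (probs_nonneg i)
    _ = δ / 9 := by simp [Fin.sum_univ_three, vals, probs]; ring
end
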